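/- For every pair of integers 2 ≤ k < n, there exists a k-connected graph on n vertices with exactly ⌈kn/2⌉ edges. -/

import Mathlib

/-!
The witness is the Harary graph on `ZMod n`: each vertex is joined to the `r = ⌊k/2⌋` nearest
vertices on either side and, for odd `k`, the `⌈n/2⌉` (near-)diameters `{i, i + ⌊n/2⌋}`,
`i < ⌈n/2⌉`, are added. These edge families are disjoint and injectively parametrised, which
gives `⌈kn/2⌉` edges.

Delete a set `S` of fewer than `k` vertices and take two surviving vertices `x`, `y`. Walking
from `x` to `y` along either arc of the cycle with jumps of length at most `r` only fails if the
arc contains `r` consecutive deleted vertices. If both arcs are blocked, then `2r ≤ |S| < k`, so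
`k = 2r + 1` and `S` is exactly the two blocks. The survivors form two runs of lengths `α` and
`β` with `α + β + 2r = n`, and the diameter leaving the first vertex of the shorter run lands in
the longer one.
-/

/-- `G` is `k`-(vertex-)connected: `G` has more than `k` vertices and removing any set of
fewer than `k` vertices leaves a connected graph. -/
def IsKConnected {V : Type*} [Fintype V] (G : SimpleGraph V) (k : ℕ) : Prop :=
  k < Fintype.card V ∧
    ∀ S : Set V, S.ncard < k → (((⊤ : G.Subgraph).deleteVerts S).coe).Connected

open Finset

theorem Sym2.mk_add_eq_mk_add_iff {G : Type*} [AddCommGroup G] {u v a b : G} :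
    s(u, u + a) = s(v, v + b) ↔ u = v ∧ a = b ∨ u = v + b ∧ a + b = 0 := by
  rw [Sym2.eq_iff]
  constructor
  · rintro (⟨rfl, h⟩ | ⟨h, h'⟩)
    · exact Or.inl ⟨rfl, add_left_cancel h⟩
    · refine Or.inr ⟨h, ?_⟩
      rw [h, add_assoc] at h'
      simpa [add_comm] using h'
  · rintro (⟨rfl, rfl⟩ | ⟨rfl, h⟩)
    · exact Or.inl ⟨rfl, rfl⟩
    · refine Or.inr ⟨rfl, ?_⟩
      rw [add_assoc, add_comm b a, h, add_zero]

namespace ZMod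

variable {n a b : ℕ}

theorem natCast_inj_of_lt (ha : a < n) (hb : b < n) : (a : ZMod n) = b ↔ a = b := by
  refine ⟨fun h => ?_, congrArg _⟩
  simpa [val_natCast_of_lt ha, val_natCast_of_lt hb] using congrArg val h

theorem natCast_ne_zero_of_lt (h0 : 0 < a) (h : a < n) : (a : ZMod n) ≠ 0 := by
  simpa using (natCast_inj_of_lt h (h0.trans h)).not.mpr h0.ne'

theorem natCast_sub_self (h : n ≤ a) : ((a - n : ℕ) : ZMod n) = a := by
  simp [Nat.cast_sub h]

theorem card_le_ncard_of_add_natCast_mem [NeZero n] {S : Set (ZMod n)} {x : ZMod n}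
    {T : Finset ℕ} (hT : ∀ t ∈ T, t < n ∧ x + t ∈ S) : T.card ≤ S.ncard := by
  have hinj : Set.InjOn (fun t : ℕ => x + t) T := fun a ha b hb h =>
    (natCast_inj_of_lt (hT a ha).1 (hT b hb).1).mp (add_left_cancel h)
  calc T.card = (T.image fun t : ℕ => x + t).card := (card_image_of_injOn hinj).symm
    _ = (↑(T.image fun t : ℕ => x + t) : Set (ZMod n)).ncard := (Set.ncard_coe_finset _).symm
    _ ≤ S.ncard := Set.ncard_le_ncard (by simpa [Set.subset_def] using fun t ht => (hT t ht).2)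

end ZMod

namespace SimpleGraph

section Avoiding

variable {V : Type*} {G : SimpleGraph V} {S : Set V} {x y z : V}

variable (G S) in
def ReachableAvoiding (x y : V) : Prop :=
  ∃ (hx : x ∉ S) (hy : y ∉ S),
    ((⊤ : G.Subgraph).deleteVerts S).coe.Reachable ⟨x, trivial, hx⟩ ⟨y, trivial, hy⟩

namespace ReachableAvoiding

theorem refl (hx : x ∉ S) : G.ReachableAvoiding S x x := ⟨hx, hx, .rfl⟩

theorem symm (h : G.ReachableAvoiding S x y) : G.ReachableAvoiding S y x :=
  let ⟨hx, hy, h⟩ := h; ⟨hy, hx, h.symm⟩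

theorem trans (h : G.ReachableAvoiding S x y) (h' : G.ReachableAvoiding S y z) :
    G.ReachableAvoiding S x z :=
  let ⟨hx, _, h⟩ := h; let ⟨_, hz, h'⟩ := h'; ⟨hx, hz, h.trans h'⟩

end ReachableAvoiding

theorem Adj.reachableAvoiding (h : G.Adj x y) (hx : x ∉ S) (hy : y ∉ S) :
    G.ReachableAvoiding S x y :=
  ⟨hx, hy, Adj.reachable (Subgraph.Adj.coe (H := (⊤ : G.Subgraph).deleteVerts S)
    (Subgraph.deleteVerts_adj.mpr ⟨trivial, hx, trivial, hy, h⟩))⟩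

theorem connected_deleteVerts_of_reachableAvoiding (hS : ∃ v, v ∉ S)
    (h : ∀ x y, x ∉ S → y ∉ S → G.ReachableAvoiding S x y) :
    ((⊤ : G.Subgraph).deleteVerts S).coe.Connected := by
  obtain ⟨v, hv⟩ := hS
  refine (connected_iff _).mpr ⟨?_, ⟨⟨v, trivial, hv⟩⟩⟩
  rintro ⟨x, -, hx⟩ ⟨y, -, hy⟩
  exact (h x y hx hy).2.2

end Avoiding

section Arcs

variable {M : Type*} [AddMonoidWithOne M] {G : SimpleGraph M} {S : Set M} {r : ℕ}

theorem reachableAvoiding_add_of_gaps (hcirc : ∀ x : M, ∀ j : ℕ, 0 < j → j ≤ r → G.Adj x (x + j))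
    {u : M} {L : ℕ} (hu : u ∉ S) (hL : u + L ∉ S)
    (hgap : ∀ s, s + r < L → ∃ t, s < t ∧ t ≤ s + r ∧ u + t ∉ S) :
    G.ReachableAvoiding S u (u + L) := by
  induction L using Nat.strong_induction_on generalizing u with
  | _ L ih =>
    rcases Nat.eq_zero_or_pos L with rfl | hL0
    · simpa using ReachableAvoiding.refl hu
    by_cases hLr : L ≤ r
    · exact (hcirc u L hL0 hLr).reachableAvoiding hu hL
    obtain ⟨t, ht0, htr, ht⟩ := hgap 0 (by omega)
    have hshift : ∀ i, t ≤ i → u + t + ((i - t : ℕ) : M) = u + i := fun i hi => by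
      rw [add_assoc, ← Nat.cast_add, Nat.add_sub_cancel' hi]
    have hrest := ih (L - t) (by omega) (u := u + t) ht (by rwa [hshift L (by omega)])
      fun s hs => by
        obtain ⟨t', hst', ht'r, ht'⟩ := hgap (t + s) (by omega)
        exact ⟨t' - t, by omega, by omega, by rwa [hshift t' (by omega)]⟩
    rw [hshift L (by omega)] at hrest
    exact ((hcirc u t ht0 (by omega)).reachableAvoiding hu ht).trans hrest

theorem reachableAvoiding_add_add (hsucc : ∀ x : M, G.Adj x (x + 1)) {u : M} {m i j : ℕ}
    (hfree : ∀ t < m, u + t ∉ S) (hi : i < m) (hj : j < m) :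
    G.ReachableAvoiding S (u + i) (u + j) := by
  wlog hij : i ≤ j generalizing i j
  · exact (this hj hi (by omega)).symm
  induction j, hij using Nat.le_induction with
  | base => exact .refl (hfree i hi)
  | succ j hij ih =>
    refine (ih (by omega)).trans ?_
    have := hsucc (u + j)
    rw [add_assoc, ← Nat.cast_add_one] at this
    exact this.reachableAvoiding (hfree j (by omega)) (hfree (j + 1) hj)

end Arcs

section Crossing

variable {n : ℕ} {G : SimpleGraph (ZMod n)} {S : Set (ZMod n)}

theorem reachableAvoiding_across_of_le (hsucc : ∀ x : ZMod n, G.Adj x (x + 1))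
    (hdiam : ∀ x : ZMod n, G.Adj x (x + (n / 2 : ℕ)) ∨ G.Adj x (x + ((n + 1) / 2 : ℕ)))
    {p q : ZMod n} {α β r : ℕ} (hαβ : α ≤ β) (hα : 0 < α) (hn : α + β + 2 * r = n)
    (hq : q = p + (α + r : ℕ)) (hA : ∀ t < α, p + t ∉ S) (hB : ∀ t < β, q + t ∉ S)
    {t₁ t₂ : ℕ} (h₁ : t₁ < α) (h₂ : t₂ < β) :
    G.ReachableAvoiding S (p + t₁) (q + t₂) := by
  -- the runs are separated by gaps of the same length `r`, so a diameter at the start of the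
  -- shorter run lands in the longer one
  obtain ⟨d, hd, hadj⟩ : ∃ d, (d = n / 2 ∨ d = (n + 1) / 2) ∧ G.Adj p (p + d) := by
    rcases hdiam p with h | h
    exacts [⟨_, Or.inl rfl, h⟩, ⟨_, Or.inr rfl, h⟩]
  have hpd : p + d = q + (d - (α + r) : ℕ) := by
    rw [hq, add_assoc, ← Nat.cast_add, Nat.add_sub_cancel' (by omega)]
  have hfar : d - (α + r) < β := by omega
  have hpS : p ∉ S := by simpa using hA 0 hα
  have hp : G.ReachableAvoiding S (p + t₁) p := by
    simpa using reachableAvoiding_add_add hsucc hA h₁ hα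
  have hchord : G.ReachableAvoiding S p (q + (d - (α + r) : ℕ)) :=
    hpd ▸ hadj.reachableAvoiding hpS (hpd ▸ hB _ hfar)
  exact (hp.trans hchord).trans (reachableAvoiding_add_add hsucc hB hfar h₂)

theorem reachableAvoiding_across (hsucc : ∀ x : ZMod n, G.Adj x (x + 1))
    (hdiam : ∀ x : ZMod n, G.Adj x (x + (n / 2 : ℕ)) ∨ G.Adj x (x + ((n + 1) / 2 : ℕ)))
    {p q : ZMod n} {α β r : ℕ} (hα : 0 < α) (hβ : 0 < β) (hn : α + β + 2 * r = n)
    (hq : q = p + (α + r : ℕ)) (hA : ∀ t < α, p + t ∉ S) (hB : ∀ t < β, q + t ∉ S)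
    {t₁ t₂ : ℕ} (h₁ : t₁ < α) (h₂ : t₂ < β) :
    G.ReachableAvoiding S (p + t₁) (q + t₂) := by
  rcases le_total α β with hαβ | hβα
  · exact reachableAvoiding_across_of_le hsucc hdiam hαβ hα hn hq hA hB h₁ h₂
  · have hp : p = q + (β + r : ℕ) := by
      rw [hq, add_assoc, ← Nat.cast_add, show α + r + (β + r) = n by omega, ZMod.natCast_self,
        add_zero]
    exact (reachableAvoiding_across_of_le hsucc hdiam hβα hβ (by omega) hp hB hA h₂ h₁).symm

theorem reachableAvoiding_of_subset_windows (hsucc : ∀ x : ZMod n, G.Adj x (x + 1))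
    (hdiam : ∀ x : ZMod n, G.Adj x (x + (n / 2 : ℕ)) ∨ G.Adj x (x + ((n + 1) / 2 : ℕ)))
    {x : ZMod n} {L s₁ s₂ r : ℕ} (h₁ : s₁ + r < L) (h₂ : L + s₂ + r < n)
    (hsub : ∀ t < n, x + t ∈ S → s₁ < t ∧ t ≤ s₁ + r ∨ L + s₂ < t ∧ t ≤ L + s₂ + r) :
    G.ReachableAvoiding S x (x + L) := by
  have hcast : ∀ a b c : ℕ, a + b = c ∨ a + b = c + n → x + a + b = x + c := by
    rintro a b c (h | h)
    · rw [add_assoc, ← Nat.cast_add, h]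
    · rw [add_assoc, ← Nat.cast_add, h, Nat.cast_add, ZMod.natCast_self, add_zero]
  have hsub' : ∀ t < 2 * n, x + t ∈ S → s₁ < t ∧ t ≤ s₁ + r ∨ L + s₂ < t ∧ t ≤ L + s₂ + r ∨
      n ≤ t ∧ (s₁ < t - n ∧ t - n ≤ s₁ + r ∨ L + s₂ < t - n ∧ t - n ≤ L + s₂ + r) := by
    intro t ht hS
    by_cases htn : t < n
    · exact (hsub t htn hS).elim .inl (.inr ∘ .inl)
    · rw [← ZMod.natCast_sub_self (by omega)] at hS
      exact .inr (.inr ⟨by omega, hsub (t - n) (by omega) hS⟩)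
  -- the surviving runs start at `x + c` (it contains `x`) and at `x + (s₁ + r + 1)`
  set c := L + s₂ + r + 1
  have hA : ∀ t < n - c + s₁ + 1, x + c + t ∉ S := by
    intro t ht hS
    rw [hcast c t (c + t) (.inl rfl)] at hS
    have := hsub' (c + t) (by omega) hS
    omega
  have hB : ∀ t < L + s₂ - s₁ - r, x + (s₁ + r + 1 : ℕ) + t ∉ S := by
    intro t ht hS
    rw [hcast _ t _ (.inl rfl)] at hS
    have := hsub _ (by omega) hS
    omega
  have hx : x + (c : ℕ) + (n - c : ℕ) = x := by simpa using hcast c (n - c) 0 (.inr (by omega))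
  have hy : x + (s₁ + r + 1 : ℕ) + (L - (s₁ + r + 1) : ℕ) = x + L := hcast _ _ _ (.inl (by omega))
  have := reachableAvoiding_across hsucc hdiam (r := r) (by omega) (by omega) (by omega)
    (hcast _ _ _ (.inr (by omega))).symm hA hB (t₁ := n - c) (t₂ := L - (s₁ + r + 1))
    (by omega) (by omega)
  rwa [hx, hy] at this

theorem reachableAvoiding_of_windows [NeZero n] {k : ℕ} (hsucc : ∀ x : ZMod n, G.Adj x (x + 1))
    (hdiam : Odd k → ∀ x : ZMod n, G.Adj x (x + (n / 2 : ℕ)) ∨ G.Adj x (x + ((n + 1) / 2 : ℕ)))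
    (hS : S.ncard < k) {x : ZMod n} {L s₁ s₂ : ℕ} (h₁ : s₁ + k / 2 < L)
    (h₂ : L + s₂ + k / 2 < n) (hw₁ : ∀ t, s₁ < t → t ≤ s₁ + k / 2 → x + t ∈ S)
    (hw₂ : ∀ t, L + s₂ < t → t ≤ L + s₂ + k / 2 → x + t ∈ S) :
    G.ReachableAvoiding S x (x + L) := by
  set W := Ioc s₁ (s₁ + k / 2) ∪ Ioc (L + s₂) (L + s₂ + k / 2)
  have hW : ∀ t ∈ W, t < n ∧ x + t ∈ S := by
    intro t ht
    simp only [W, mem_union, mem_Ioc] at ht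
    rcases ht with h | h
    exacts [⟨by omega, hw₁ t h.1 h.2⟩, ⟨by omega, hw₂ t h.1 h.2⟩]
  have hWcard : W.card = 2 * (k / 2) := by
    rw [card_union_of_disjoint (Finset.disjoint_left.2 fun t ht ht' => by
        simp only [mem_Ioc] at ht ht'; omega),
      Nat.card_Ioc, Nat.card_Ioc]
    omega
  -- the two blocks already exhaust the budget of deleted vertices
  have hk : Odd k := by
    have := ZMod.card_le_ncard_of_add_natCast_mem hW
    rw [Nat.odd_iff]
    omega
  refine reachableAvoiding_of_subset_windows hsucc (hdiam hk) h₁ h₂ fun t ht hxt => ?_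
  by_contra htW
  have htW' : t ∉ W := by simpa [W] using htW
  have := ZMod.card_le_ncard_of_add_natCast_mem (T := insert t W)
    (by simpa using ⟨⟨ht, hxt⟩, hW⟩)
  rw [card_insert_of_notMem htW', hWcard] at this
  omega

theorem reachableAvoiding_of_ncard_lt [NeZero n] {k : ℕ} (hk : 2 ≤ k)
    (hcirc : ∀ x : ZMod n, ∀ j : ℕ, 0 < j → j ≤ k / 2 → G.Adj x (x + j))
    (hdiam : Odd k → ∀ x : ZMod n, G.Adj x (x + (n / 2 : ℕ)) ∨ G.Adj x (x + ((n + 1) / 2 : ℕ)))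
    (hS : S.ncard < k) {x y : ZMod n} (hx : x ∉ S) (hy : y ∉ S) :
    G.ReachableAvoiding S x y := by
  have hsucc : ∀ x : ZMod n, G.Adj x (x + 1) := fun x => by
    simpa using hcirc x 1 one_pos (by omega)
  obtain ⟨L, hL, rfl⟩ : ∃ L < n, y = x + L := ⟨(y - x).val, ZMod.val_lt _, by simp⟩
  by_cases hfwd : ∀ s, s + k / 2 < L → ∃ t, s < t ∧ t ≤ s + k / 2 ∧ x + t ∉ S
  · exact reachableAvoiding_add_of_gaps hcirc hx hy hfwd
  have hback : x + L + ((n - L : ℕ) : ZMod n) = x := by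
    rw [add_assoc, ← Nat.cast_add, Nat.add_sub_cancel' hL.le, ZMod.natCast_self, add_zero]
  by_cases hbwd : ∀ s, s + k / 2 < n - L → ∃ t, s < t ∧ t ≤ s + k / 2 ∧ x + L + t ∉ S
  · have := reachableAvoiding_add_of_gaps hcirc hy (by rwa [hback]) hbwd
    rw [hback] at this
    exact this.symm
  push Not at hfwd hbwd
  obtain ⟨s₁, hs₁, hw₁⟩ := hfwd
  obtain ⟨s₂, hs₂, hw₂⟩ := hbwd
  refine reachableAvoiding_of_windows hsucc hdiam hS hs₁ (s₂ := s₂) (by omega) hw₁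
    fun t ht ht' => ?_
  have := hw₂ (t - L) (by omega) (by omega)
  rwa [add_assoc, ← Nat.cast_add, Nat.add_sub_cancel' (by omega)] at this

end Crossing

end SimpleGraph

open SimpleGraph

def cyclePowEdges (n r : ℕ) : Finset (Sym2 (ZMod n)) :=
  (range n ×ˢ Icc 1 r).image fun p => s((p.1 : ZMod n), p.1 + p.2)

/-- For odd `n` these are the near-diameters `{i, i + (n - 1) / 2}`, `i ≤ (n - 1) / 2`, so the
vertex `(n - 1) / 2` lies on two of them. -/
def diameterEdges (n : ℕ) : Finset (Sym2 (ZMod n)) :=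
  (range ((n + 1) / 2)).image fun i : ℕ => s((i : ZMod n), i + (n / 2 : ℕ))

def harary (k n : ℕ) : SimpleGraph (ZMod n) :=
  fromEdgeSet ↑(cyclePowEdges n (k / 2) ∪ if Odd k then diameterEdges n else ∅)

section Harary

variable {k n : ℕ}

theorem harary_adj_add [NeZero n] (hkn : k < n) {j : ℕ} (hj : 0 < j) (hjk : j ≤ k / 2)
    (x : ZMod n) : (harary k n).Adj x (x + j) := by
  refine (fromEdgeSet_adj _).mpr ⟨mem_union_left _ (mem_image.mpr ⟨(x.val, j), ?_, by simp⟩), ?_⟩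
  · simp only [mem_product, mem_range, mem_Icc]
    exact ⟨x.val_lt, hj, hjk⟩
  · exact fun h => ZMod.natCast_ne_zero_of_lt hj (by omega) (left_eq_add.mp h)

theorem harary_adj_diameter (hk : Odd k) (hn : 2 ≤ n) (x : ZMod n) :
    (harary k n).Adj x (x + (n / 2 : ℕ)) ∨ (harary k n).Adj x (x + ((n + 1) / 2 : ℕ)) := by
  have : NeZero n := ⟨by omega⟩
  have hxn := x.val_lt
  have hdiam : ∀ i < (n + 1) / 2, ∀ y z : ZMod n, s((i : ZMod n), i + (n / 2 : ℕ)) = s(y, z) →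
      y ≠ z → (harary k n).Adj y z := fun i hi y z h hyz =>
    (fromEdgeSet_adj _).mpr ⟨mem_union_right _ (by
      rw [if_pos hk, diameterEdges, ← h]; exact mem_image_of_mem _ (mem_range.mpr hi)), hyz⟩
  have hne : ∀ d, 0 < d → d < n → x ≠ x + d := fun d hd hdn h =>
    ZMod.natCast_ne_zero_of_lt hd hdn (left_eq_add.mp h)
  by_cases hx : x.val < (n + 1) / 2
  · exact .inl (hdiam x.val hx _ _ (by simp) (hne _ (by omega) (by omega)))
  · refine .inr (hdiam (x.val - n / 2) (by omega) _ _ ?_ (hne _ (by omega) (by omega)))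
    have hi : ((x.val - n / 2 : ℕ) : ZMod n) + (n / 2 : ℕ) = x := by
      rw [← Nat.cast_add, Nat.sub_add_cancel (by omega), ZMod.natCast_zmod_val]
    have hi' : ((x.val - n / 2 : ℕ) : ZMod n) = x + ((n + 1) / 2 : ℕ) := by
      conv_rhs => rw [← ZMod.natCast_zmod_val x, ← Nat.cast_add,
        show x.val + (n + 1) / 2 = x.val - n / 2 + n by omega]
      rw [Nat.cast_add, ZMod.natCast_self, add_zero]
    rw [hi, hi', Sym2.eq_swap]

theorem card_cyclePowEdges {r : ℕ} (h : 2 * r < n) : (cyclePowEdges n r).card = n * r := by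
  rw [cyclePowEdges, card_image_of_injOn, card_product, card_range, Nat.card_Icc,
    Nat.add_sub_cancel]
  rintro ⟨i, j⟩ hij ⟨i', j'⟩ hij' heq
  simp only [coe_product, Set.mem_prod, mem_coe, mem_range, mem_Icc] at hij hij'
  rcases Sym2.mk_add_eq_mk_add_iff.mp heq with ⟨hi, hj⟩ | ⟨-, hjj⟩
  · rw [ZMod.natCast_inj_of_lt (by omega) (by omega)] at hi hj
    exact Prod.ext hi hj
  · rw [← Nat.cast_add] at hjj
    exact absurd hjj (ZMod.natCast_ne_zero_of_lt (by omega) (by omega))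

theorem card_diameterEdges (h : 2 ≤ n) : (diameterEdges n).card = (n + 1) / 2 := by
  rw [diameterEdges, card_image_of_injOn, card_range]
  intro i hi i' hi' heq
  simp only [coe_range, Set.mem_Iio] at hi hi'
  rcases Sym2.mk_add_eq_mk_add_iff.mp heq with ⟨h, -⟩ | ⟨h, hd⟩
  · exact (ZMod.natCast_inj_of_lt (by omega) (by omega)).mp h
  · rw [← Nat.cast_add, ZMod.natCast_inj_of_lt (by omega) (by omega)] at h
    rw [← Nat.cast_add] at hd
    have : n / 2 + n / 2 = n := by
      by_contra hne
      exact ZMod.natCast_ne_zero_of_lt (by omega) (by omega) hd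
    omega

theorem disjoint_cyclePowEdges_diameterEdges {r : ℕ} (h : 2 * r + 1 < n) :
    Disjoint (cyclePowEdges n r) (diameterEdges n) := by
  simp only [cyclePowEdges, diameterEdges, Finset.disjoint_left, mem_image]
  rintro e ⟨⟨i, j⟩, hij, rfl⟩ ⟨i', -, heq⟩
  simp only [mem_product, mem_range, mem_Icc] at hij
  rcases Sym2.mk_add_eq_mk_add_iff.mp heq with ⟨-, hj⟩ | ⟨-, hj⟩
  · rw [ZMod.natCast_inj_of_lt (by omega) (by omega)] at hj
    omega
  · rw [← Nat.cast_add] at hj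
    exact ZMod.natCast_ne_zero_of_lt (by omega) (by omega) hj

theorem harary_edgeSet (hkn : k < n) :
    (harary k n).edgeSet = ↑(cyclePowEdges n (k / 2) ∪ if Odd k then diameterEdges n else ∅) := by
  refine (edgeSet_fromEdgeSet _).trans (Disjoint.sdiff_eq_left (Set.disjoint_left.mpr ?_))
  simp only [coe_union, Set.mem_union, mem_coe, cyclePowEdges, diameterEdges, mem_image]
  rintro e (⟨⟨i, j⟩, hij, rfl⟩ | he) hdiag
  · simp only [mem_product, mem_range, mem_Icc] at hij
    exact ZMod.natCast_ne_zero_of_lt (n := n) (a := j) (by omega) (by omega)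
      (left_eq_add.mp (Sym2.mk_isDiag_iff.mp hdiag))
  · split_ifs at he with hk
    · obtain ⟨i, -, rfl⟩ := mem_image.mp he
      obtain ⟨k', rfl⟩ := hk
      exact ZMod.natCast_ne_zero_of_lt (n := n) (a := n / 2) (by omega) (by omega)
        (left_eq_add.mp (Sym2.mk_isDiag_iff.mp hdiag))
    · simp at he

theorem harary_edgeSet_ncard (hkn : k < n) : (harary k n).edgeSet.ncard = (k * n + 1) / 2 := by
  rw [harary_edgeSet hkn, Set.ncard_coe_finset]
  obtain ⟨r, rfl | rfl⟩ := Nat.even_or_odd' k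
  · rw [if_neg (by simp), union_empty, card_cyclePowEdges (by omega),
      show 2 * r / 2 = r by omega, show 2 * r * n = 2 * (n * r) by ring]
    omega
  · rw [if_pos (odd_two_mul_add_one r), card_union_of_disjoint
      (disjoint_cyclePowEdges_diameterEdges (by omega)), card_cyclePowEdges (by omega),
      card_diameterEdges (by omega), show (2 * r + 1) / 2 = r by omega,
      show (2 * r + 1) * n = 2 * (n * r) + n by ring]
    omega

end Harary

theorem connected_deleteVerts_harary {k n : ℕ} (hk : 2 ≤ k) (hkn : k < n) {S : Set (ZMod n)}
    (hS : S.ncard < k) : ((⊤ : (harary k n).Subgraph).deleteVerts S).coe.Connected := by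
  have : NeZero n := ⟨by omega⟩
  refine connected_deleteVerts_of_reachableAvoiding ?_ fun x y hx hy =>
    reachableAvoiding_of_ncard_lt hk (fun x j hj hjk => harary_adj_add hkn hj hjk x)
      (fun hodd => harary_adj_diameter hodd (by omega)) hS hx hy
  by_contra! h
  rw [Set.eq_univ_of_forall h, Set.ncard_univ, Nat.card_zmod] at hS
  omega

theorem isKConnected_harary {k n : ℕ} [NeZero n] (hk : 2 ≤ k) (hkn : k < n) :
    IsKConnected (harary k n) k :=
  ⟨by simpa using hkn, fun _ hS => connected_deleteVerts_harary hk hkn hS⟩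

/-- (Harary, 1962) For all `2 ≤ k < n` there is a `k`-connected graph on `n`
vertices with exactly `⌈kn/2⌉` edges. -/
theorem stmt_6 (n k : ℕ) (hk : 2 ≤ k) (hkn : k < n) :
    ∃ G : SimpleGraph (Fin n), IsKConnected G k ∧ G.edgeSet.ncard = (k * n + 1) / 2 := by
  obtain ⟨m, rfl⟩ : ∃ m, n = m + 1 := ⟨n - 1, by omega⟩
  exact ⟨harary k (m + 1), isKConnected_harary hk hkn, harary_edgeSet_ncard hkn⟩
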